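/- arXiv:1511.01646 — 7 statements merged into one kernel-verified Lean document; each statement's English description precedes it below -/
import Mathlib

section
/- Let q be a prime power and n ≥ 1. Every linear code C ⊆ F_q^{2n} of dimension k admits a generalized Plotkin decomposition: there exist nonnegative integers k1, k2, k3 with k = k1 + k2 and k3 ≤ k1, and matrices G1 ∈ F_q^{k1×n}, G2 ∈ F_q^{k2×n}, G3 ∈ F_q^{k3×n}, such that, writing Ĩ for the k1×k3 matrix obtained by stacking the (k1−k3)×k3 zero matrix on top of the k3×k3 identity matrix, the k×2n block matrix G whose first k1 rows form (G1 + ĨG3 | ĨG3) and whose last k2 rows form (G2 | G2) has linearly independent rows and its row space equals C. -/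
set_option maxHeartbeats 1000000 in
set_option synthInstance.maxHeartbeats 400000 in
/-- Every linear code `C ⊆ F_q^{2n}` of dimension `k` admits a generalized
Plotkin decomposition: there are `k1, k2, k3` with `k = k1 + k2`, `k3 ≤ k1`, and matrices
`G1 : k1×n`, `G2 : k2×n`, `G3 : k3×n` such that, with `Ĩ` the `k1×k3` matrix obtained by
stacking a `(k1−k3)×k3` zero matrix on top of the `k3×k3` identity, the block matrix `G`
whose first `k1` rows are `(G1 + ĨG3 | ĨG3)` and last `k2` rows are `(G2 | G2)` has
linearly independent rows and row space equal to `C`. -/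
theorem generalized_plotkin_decomposition {F : Type*} [Field F] [Fintype F] {n k : ℕ}
    (hn : 1 ≤ n) (C : Submodule F (Fin n ⊕ Fin n → F))
    (hk : Module.finrank F C = k) :
    ∃ (k1 k2 k3 : ℕ) (_ : k = k1 + k2) (_ : k3 ≤ k1)
      (G1 : Matrix (Fin k1) (Fin n) F) (G2 : Matrix (Fin k2) (Fin n) F)
      (G3 : Matrix (Fin k3) (Fin n) F),
      let Itil : Matrix (Fin k1) (Fin k3) F :=
        Matrix.of fun i j => if (i : ℕ) = (k1 - k3) + (j : ℕ) then 1 else 0;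
      let G : Matrix (Fin k1 ⊕ Fin k2) (Fin n ⊕ Fin n) F :=
        Matrix.fromBlocks (G1 + Itil * G3) (Itil * G3) G2 G2;
      LinearIndependent F (fun r => G r) ∧
        Submodule.span F (Set.range fun r => G r) = C := by
  classical
  -- the difference map and the diagonal embedding
  let π : (Fin n ⊕ Fin n → F) →ₗ[F] (Fin n → F) :=
    { toFun := fun x i => x (Sum.inl i) - x (Sum.inr i)
      map_add' := by intro x y; funext i; simp only [Pi.add_apply]; ring
      map_smul' := by
        intro c x; funext i
        simp only [Pi.smul_apply, smul_eq_mul, RingHom.id_apply]; ring }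
  let ιd : (Fin n → F) →ₗ[F] (Fin n ⊕ Fin n → F) :=
    { toFun := fun x => Sum.elim x x
      map_add' := by
        intro x y; funext s
        cases s <;> simp only [Pi.add_apply, Sum.elim_inl, Sum.elim_inr]
      map_smul' := by
        intro c x; funext s
        cases s <;> simp only [Pi.smul_apply, Sum.elim_inl, Sum.elim_inr, RingHom.id_apply] }
  have hπι : ∀ x, π (ιd x) = 0 := by
    intro x; funext i; simp [π, ιd]
  have hιinj : ∀ x, ιd x = 0 → x = 0 := by
    intro x hx; funext i
    have := congrFun hx (Sum.inl i)
    simpa [ιd] using this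
  let D : Submodule F (Fin n → F) := C.map π
  let W : Submodule F (Fin n → F) := C.comap ιd
  set k1 := Module.finrank F D with hk1
  set k2 := Module.finrank F W with hk2
  -- rank-nullity : k = k1 + k2
  let f : C →ₗ[F] (Fin n → F) := π ∘ₗ C.subtype
  have hrange : LinearMap.range f = D := by
    rw [LinearMap.range_comp, Submodule.range_subtype]
  let e : (LinearMap.ker f) ≃ₗ[F] W :=
    { toFun := fun x => ⟨fun i => (x.1 : Fin n ⊕ Fin n → F) (Sum.inr i), by
        have hx : π (x.1 : Fin n ⊕ Fin n → F) = 0 := x.2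
        have hxx : ιd (fun i => (x.1 : Fin n ⊕ Fin n → F) (Sum.inr i)) = (x.1 : Fin n ⊕ Fin n → F) := by
          funext s
          cases s with
          | inl i =>
            have h := congrFun hx i
            simp only [π, LinearMap.coe_mk, AddHom.coe_mk, Pi.zero_apply] at h
            simp [ιd, sub_eq_zero.mp h]
          | inr i => simp [ιd]
        show ιd _ ∈ C
        rw [hxx]; exact x.1.2⟩
      map_add' := by intro x y; ext i; simp
      map_smul' := by intro c x; ext i; simp
      invFun := fun y => ⟨⟨ιd y.1, y.2⟩, by
        show π (ιd y.1) = 0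
        exact hπι y.1⟩
      left_inv := by
        intro x
        ext s
        cases s with
        | inl i =>
          have hx : π (x.1 : Fin n ⊕ Fin n → F) = 0 := x.2
          have h := congrFun hx i
          simp only [π, LinearMap.coe_mk, AddHom.coe_mk, Pi.zero_apply] at h
          simp [ιd, sub_eq_zero.mp h]
        | inr i => simp [ιd]
      right_inv := by intro y; ext i; simp [ιd] }
  have hk12 : k = k1 + k2 := by
    have h := LinearMap.finrank_range_add_finrank_ker f
    rw [hrange, hk] at h
    have hker : Module.finrank F (LinearMap.ker f) = k2 := by
      rw [hk2]; exact e.finrank_eq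
    omega
  -- basis of D with lifts
  let bD := Module.finBasis F D
  let a : Fin k1 → (Fin n → F) := fun i => (bD i : Fin n → F)
  have ha : LinearIndependent F a :=
    bD.linearIndependent.map' D.subtype (Submodule.ker_subtype D)
  have hw : ∀ i, ∃ w, w ∈ C ∧ π w = a i := by
    intro i
    have : a i ∈ D := (bD i).2
    rcases Submodule.mem_map.mp this with ⟨w, hwC, hwπ⟩
    exact ⟨w, hwC, hwπ⟩
  choose w hwC hwπ using hw
  -- basis of W
  let bW := Module.finBasis F W
  let cc : Fin k2 → (Fin n → F) := fun j => (bW j : Fin n → F)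
  have hc : LinearIndependent F cc :=
    bW.linearIndependent.map' W.subtype (Submodule.ker_subtype W)
  have hccC : ∀ j, ιd (cc j) ∈ C := fun j => (bW j).2
  -- the matrices
  refine ⟨k1, k2, k1, hk12, le_refl k1,
    Matrix.of (fun i j => a i j), Matrix.of (fun i j => cc i j),
    Matrix.of (fun i j => w i (Sum.inr j)), ?_⟩
  intro Itil G
  have hI : Itil = 1 := by
    ext i j
    simp only [Itil, Matrix.of_apply, Matrix.one_apply, Nat.sub_self, Nat.zero_add]
    by_cases h : i = j
    · simp [h]
    · have : (i : ℕ) ≠ (j : ℕ) := fun hh => h (Fin.ext hh)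
      simp [h, this]
  -- the rows of G
  let v : Fin k1 ⊕ Fin k2 → (Fin n ⊕ Fin n → F) := Sum.elim w (fun j => ιd (cc j))
  have hGv : (fun r => G r) = v := by
    funext r
    cases r with
    | inl i =>
      funext s
      cases s with
      | inl j =>
        show (Matrix.of (fun i j => a i j) + Itil * Matrix.of (fun i j => w i (Sum.inr j))) i j = w i (Sum.inl j)
        rw [hI, Matrix.one_mul]
        have h := congrFun (hwπ i) j
        simp only [π, LinearMap.coe_mk, AddHom.coe_mk] at h
        simp [Matrix.add_apply, ← h]
      | inr j =>
        show (Itil * Matrix.of (fun i j => w i (Sum.inr j))) i j = w i (Sum.inr j)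
        rw [hI, Matrix.one_mul]
        simp
    | inr i =>
      funext s
      cases s <;> simp [G, v, ιd, Matrix.fromBlocks]
  rw [hGv]
  -- linear independence
  have hLI : LinearIndependent F v := by
    rw [Fintype.linearIndependent_iff]
    intro g hg
    rw [Fintype.sum_sum_type] at hg
    have h1 : ∑ i, g (Sum.inl i) • a i = 0 := by
      have := congrArg π hg
      simp only [map_add, map_sum, map_smul, map_zero] at this
      simp only [v, Sum.elim_inl, Sum.elim_inr, hπι, smul_zero, Finset.sum_const_zero,
        add_zero, hwπ] at this
      exact this
    have hgl : ∀ i, g (Sum.inl i) = 0 :=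
      Fintype.linearIndependent_iff.mp ha _ h1
    have h2 : ∑ j, g (Sum.inr j) • ιd (cc j) = 0 := by
      simp only [v, Sum.elim_inl, Sum.elim_inr] at hg
      simp only [hgl, zero_smul, Finset.sum_const_zero, zero_add] at hg
      exact hg
    have h3 : ιd (∑ j, g (Sum.inr j) • cc j) = 0 := by
      rw [map_sum]; simp only [map_smul]; exact h2
    have h4 : ∑ j, g (Sum.inr j) • cc j = 0 := hιinj _ h3
    have hgr : ∀ j, g (Sum.inr j) = 0 :=
      Fintype.linearIndependent_iff.mp hc _ h4
    intro r
    cases r with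
    | inl i => exact hgl i
    | inr j => exact hgr j
  refine ⟨hLI, ?_⟩
  -- span
  have hle : Submodule.span F (Set.range v) ≤ C := by
    rw [Submodule.span_le]
    rintro _ ⟨r, rfl⟩
    cases r with
    | inl i => exact hwC i
    | inr j => exact hccC j
  have hfr : Module.finrank F (Submodule.span F (Set.range v)) = k1 + k2 := by
    rw [finrank_span_eq_card hLI]
    simp
  refine Submodule.eq_of_le_of_finrank_le hle ?_
  rw [hfr, hk, hk12]
end

section
/- Let F_q be a finite field, G an invertible n×n matrix over F_q, and for 0 ≤ i < n let d_i be the minimum Hamming weight of a nonzero vector in the row space of rows i, i+1, …, n−1 of G. For each 0 ≤ i < n let 𝔹_i ⊆ F_q^N be a linear code of dimension K_i whose nonzero codewords all have Hamming weight at least D_i. Let 𝒞 be the image of the linear map sending each tuple (b_0, …, b_{n−1}) ∈ 𝔹_0 × ⋯ × 𝔹_{n−1} to the n×N matrix GᵀB, where B is the n×N matrix whose i-th row is b_i. Then 𝒞 is a linear code of length nN (Hamming weight counted over all nN matrix entries) and dimension Σ_{i=0}^{n−1} K_i, and every nonzero element of 𝒞 has Hamming weight at least min{ d_i·D_i : 0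 ≤ i < n, K_i > 0 }. -/
/-!
Let `i` be the first nonzero row of the outer matrix `X`. Column `k` of `Gᵀ X` is `cᵀ G`, where
`c` is column `k` of `X`; since `c` vanishes above `i`, this lies in the span of rows `i, …, n−1`
of `G`, and it is nonzero whenever `X i k ≠ 0` because `G` is invertible. Hence at least
`wt (X i) ≥ D i` columns each have weight at least `d i`. The dimension is `∑ K i` because
`X ↦ Gᵀ X` is injective.
-/

open Matrix

lemma hammingNorm_uncurry_eq_sum_col {ι κ α : Type*} [Fintype ι] [Fintype κ] [Zero α]
    [DecidableEq α] (M : Matrix ι κ α) :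
    hammingNorm (fun p : ι × κ => M p.1 p.2) = ∑ j, hammingNorm (Mᵀ j) := by
  simp only [hammingNorm, Finset.card_filter]
  exact Fintype.sum_prod_type_right _

section ConcatenatedCode

variable {F ι κ : Type*} [Field F] [Fintype ι]

def generalizedConcatenatedCode (G : Matrix ι ι F) (B : ι → Submodule F (κ → F)) :
    Submodule F (Matrix ι κ F) :=
  LinearMap.range (mulLeftLinearMap κ F Gᵀ ∘ₗ LinearMap.piMap fun i => (B i).subtype)

lemma mem_generalizedConcatenatedCode {G : Matrix ι ι F} {B : ι → Submodule F (κ → F)}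
    {M : Matrix ι κ F} :
    M ∈ generalizedConcatenatedCode G B ↔
      ∃ X : Matrix ι κ F, (∀ i, X i ∈ B i) ∧ M = Gᵀ * X := by
  constructor
  · rintro ⟨b, rfl⟩
    exact ⟨fun i => b i, fun i => (b i).2, rfl⟩
  · rintro ⟨X, hX, rfl⟩
    exact ⟨fun i => ⟨X i, hX i⟩, rfl⟩

lemma finrank_generalizedConcatenatedCode [DecidableEq ι] [Fintype κ] {G : Matrix ι ι F}
    (hG : IsUnit G) (B : ι → Submodule F (κ → F)) :
    Module.finrank F (generalizedConcatenatedCode G B) = ∑ i, Module.finrank F (B i) := by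
  have hGt : IsUnit Gᵀ.det := by rwa [det_transpose, ← isUnit_iff_isUnit_det]
  have hinj : Function.Injective (mulLeftLinearMap κ F Gᵀ ∘ₗ
      LinearMap.piMap fun i => (B i).subtype) :=
    (Function.LeftInverse.injective fun X => nonsing_inv_mul_cancel_left _ X hGt).comp
      (Function.Injective.piMap fun i => (B i).injective_subtype)
  rw [generalizedConcatenatedCode, LinearMap.finrank_range_of_inj hinj, Module.finrank_pi_fintype]

end ConcatenatedCode

section MinimumDistance

variable {F ι κ : Type*} [Field F] [LinearOrder ι]

def tailRowSpan (G : Matrix ι κ F) (i : ι) : Submodule F (κ → F) :=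
  Submodule.span F {r | ∃ j, i ≤ j ∧ r = G j}

lemma vecMul_mem_tailRowSpan [Fintype ι] (G : Matrix ι κ F) {i : ι} {c : ι → F}
    (hc : ∀ j < i, c j = 0) :
    c ᵥ* G ∈ tailRowSpan G i := by
  rw [vecMul_eq_sum]
  refine Submodule.sum_mem _ fun j _ => ?_
  rcases lt_or_ge j i with hji | hij
  · simp [hc j hji]
  · exact Submodule.smul_mem _ _ (Submodule.subset_span ⟨j, hij, rfl⟩)

variable [DecidableEq F]

noncomputable def minWeight [Fintype κ] (C : Submodule F (κ → F)) : ℕ :=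
  sInf {w | ∃ v ∈ C, v ≠ 0 ∧ hammingNorm v = w}

lemma minWeight_le_hammingNorm [Fintype κ] {C : Submodule F (κ → F)} {v : κ → F} (hv : v ∈ C)
    (hv₀ : v ≠ 0) : minWeight C ≤ hammingNorm v :=
  Nat.sInf_le ⟨v, hv, hv₀, rfl⟩

variable [Fintype ι]

lemma minWeight_tailRowSpan_le_hammingNorm_vecMul {G : Matrix ι ι F} (hG : IsUnit G) {i : ι}
    {c : ι → F} (hc : ∀ j < i, c j = 0) (hci : c i ≠ 0) :
    minWeight (tailRowSpan G i) ≤ hammingNorm (c ᵥ* G) := by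
  refine minWeight_le_hammingNorm (vecMul_mem_tailRowSpan G hc) fun h => hci ?_
  rw [← zero_vecMul G] at h
  exact congrFun (vecMul_injective_of_isUnit hG h) i

lemma minWeight_mul_hammingNorm_le [Fintype κ] {G : Matrix ι ι F} (hG : IsUnit G)
    {X : Matrix ι κ F} {i : ι} (hX : ∀ j < i, X j = 0) :
    minWeight (tailRowSpan G i) * hammingNorm (X i) ≤
      hammingNorm (fun p : ι × κ => (Gᵀ * X) p.1 p.2) := by
  have hcol : ∀ k, (Gᵀ * X)ᵀ k = Xᵀ k ᵥ* G := fun k => by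
    rw [transpose_mul, transpose_transpose, mul_apply_eq_vecMul]
  rw [hammingNorm_uncurry_eq_sum_col, mul_comm, hammingNorm, ← smul_eq_mul]
  calc _ ≤ ∑ k ∈ {k | X i k ≠ 0}, hammingNorm ((Gᵀ * X)ᵀ k) :=
        Finset.card_nsmul_le_sum _ _ _ fun k hk => hcol k ▸
          minWeight_tailRowSpan_le_hammingNorm_vecMul hG (fun j hj => congrFun (hX j hj) k)
            (Finset.mem_filter.1 hk).2
    _ ≤ _ := Finset.sum_le_sum_of_subset (Finset.subset_univ _)

end MinimumDistance

theorem gcc_dim_and_min_dist_general {F : Type*} [Field F] [DecidableEq F] {n N : ℕ}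
    (G : Matrix (Fin n) (Fin n) F) (hG : IsUnit G)
    (K D d : Fin n → ℕ)
    (hd : ∀ i : Fin n, d i =
      sInf {w | ∃ v ∈ Submodule.span F {r | ∃ j : Fin n, i ≤ j ∧ r = G j},
        v ≠ 0 ∧ hammingNorm v = w})
    (B : Fin n → Submodule F (Fin N → F))
    (hK : ∀ i, Module.finrank F (B i) = K i)
    (hD : ∀ i, ∀ b ∈ B i, b ≠ 0 → D i ≤ hammingNorm b) :
    ∃ 𝒞 : Submodule F (Matrix (Fin n) (Fin N) F),
      (𝒞 : Set (Matrix (Fin n) (Fin N) F)) =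
        {M | ∃ Bm : Matrix (Fin n) (Fin N) F, (∀ i, Bm i ∈ B i) ∧ M = Gᵀ * Bm} ∧
      Module.finrank F 𝒞 = ∑ i, K i ∧
      ∀ M : Matrix (Fin n) (Fin N) F,
        (∃ Bm : Matrix (Fin n) (Fin N) F, (∀ i, Bm i ∈ B i) ∧ M = Gᵀ * Bm) → M ≠ 0 →
          sInf {w | ∃ i : Fin n, 0 < K i ∧ w = d i * D i} ≤
            hammingNorm (fun p : Fin n × Fin N => M p.1 p.2) := by
  refine ⟨generalizedConcatenatedCode G B, Set.ext fun M => mem_generalizedConcatenatedCode,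
    by simp [finrank_generalizedConcatenatedCode hG, hK], ?_⟩
  rintro M ⟨X, hX, rfl⟩ hM
  have hX₀ : X ≠ 0 := by
    rintro rfl
    exact hM (Matrix.mul_zero _)
  obtain ⟨i, hi, hlow⟩ : ∃ i, X i ≠ 0 ∧ ∀ j < i, X j = 0 := by
    obtain ⟨i, hi, hmin⟩ := wellFounded_lt.has_min {i | X i ≠ 0} (Function.ne_iff.1 hX₀)
    exact ⟨i, hi, fun j hj => by_contra fun hXj => hmin j hXj hj⟩
  have hKi : 0 < K i := by
    rw [← hK i, Nat.pos_iff_ne_zero, Ne, Submodule.finrank_eq_zero]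
    exact (Submodule.ne_bot_iff _).2 ⟨X i, hX i, hi⟩
  calc sInf {w | ∃ i : Fin n, 0 < K i ∧ w = d i * D i}
      ≤ d i * D i := Nat.sInf_le ⟨i, hKi, rfl⟩
    _ ≤ d i * hammingNorm (X i) := Nat.mul_le_mul_left _ (hD i _ (hX i) hi)
    _ ≤ _ := hd i ▸ minWeight_mul_hammingNorm_le hG hlow

/-- The generalized concatenated code construction. `G` is an invertible
`n×n` matrix, `d i` is the minimum Hamming weight of a nonzero vector in the row space of
rows `i, …, n−1` of `G`, and `B i ⊆ F_q^N` is a linear code of dimension `K i` all of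
whose nonzero codewords have weight at least `D i`. The image `𝒞` of
`(b_0, …, b_{n−1}) ↦ Gᵀ·B` is then a linear code of length `nN`, dimension `∑ K i`, and
every nonzero element has Hamming weight at least `min { d i · D i : K i > 0 }`. -/
theorem gcc_dim_and_min_dist {F : Type*} [Field F] [Fintype F] [DecidableEq F] {n N : ℕ}
    (G : Matrix (Fin n) (Fin n) F) (hG : IsUnit G)
    (K D d : Fin n → ℕ)
    (hd : ∀ i : Fin n, d i =
      sInf {w | ∃ v ∈ Submodule.span F {r | ∃ j : Fin n, i ≤ j ∧ r = G j},
        v ≠ 0 ∧ hammingNorm v = w})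
    (B : Fin n → Submodule F (Fin N → F))
    (hK : ∀ i, Module.finrank F (B i) = K i)
    (hD : ∀ i, ∀ b ∈ B i, b ≠ 0 → D i ≤ hammingNorm b) :
    ∃ 𝒞 : Submodule F (Matrix (Fin n) (Fin N) F),
      (𝒞 : Set (Matrix (Fin n) (Fin N) F)) =
        {M | ∃ Bm : Matrix (Fin n) (Fin N) F, (∀ i, Bm i ∈ B i) ∧ M = Gᵀ * Bm} ∧
      Module.finrank F 𝒞 = ∑ i, K i ∧
      ∀ M : Matrix (Fin n) (Fin N) F,
        (∃ Bm : Matrix (Fin n) (Fin N) F, (∀ i, Bm i ∈ B i) ∧ M = Gᵀ * Bm) → M ≠ 0 →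
          sInf {w | ∃ i : Fin n, 0 < K i ∧ w = d i * D i} ≤
            hammingNorm (fun p : Fin n × Fin N => M p.1 p.2) :=
  gcc_dim_and_min_dist_general G hG K D d hd B hK hD
end

section
/- Let F_q be a finite field, C ⊆ F_q^n a linear code of dimension k, and A an invertible n×n matrix over F_q. Then there exist n−k distinct indices j_0, …, j_{n−k−1} ∈ {0, …, n−1} and coefficients V_{i,s} ∈ F_q for 0 ≤ i < n−k and 0 ≤ s < j_i, such that for every u ∈ F_q^n: the vector uA belongs to C if and only if u_{j_i} = Σ_{s=0}^{j_i − 1} V_{i,s} u_s holds for all 0 ≤ i < n−k. (This is the representation of an arbitrary linear code via dynamic frozen symbols.) -/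
open Finset Module

namespace DynFrozen

variable {F : Type*} [Field F] {n : ℕ}

/-- Truncation to coordinates `< j`. -/
noncomputable def trunc (F : Type*) [Field F] (n j : ℕ) : (Fin n → F) →ₗ[F] (Fin n → F) where
  toFun u := fun s => if (s : ℕ) < j then u s else 0
  map_add' u v := by funext s; by_cases h : (s : ℕ) < j <;> simp [h]
  map_smul' c u := by funext s; by_cases h : (s : ℕ) < j <;> simp [h]

lemma trunc_apply (j : ℕ) (u : Fin n → F) (s : Fin n) :
    trunc F n j u s = if (s : ℕ) < j then u s else 0 := rfl

lemma trunc_trunc (j : ℕ) (u : Fin n → F) :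
    trunc F n j (trunc F n (j + 1) u) = trunc F n j u := by
  funext s
  simp only [trunc_apply]
  by_cases h : (s : ℕ) < j
  · simp [h, Nat.lt_succ_of_lt h]
  · simp [h]

lemma count_incr {r : ℕ → ℕ} (mono : ∀ j, r j ≤ r (j + 1)) (step : ∀ j, r (j + 1) ≤ r j + 1)
    (n : ℕ) :
    ((Finset.range n).filter (fun j => ¬ (r (j + 1) = r j))).card + r 0 = r n := by
  induction n with
  | zero => simp
  | succ n ih =>
    rw [Finset.range_add_one, Finset.filter_insert]
    by_cases h : r (n + 1) = r n
    · simp only [h, not_true_eq_false, if_false]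
      omega
    · rw [if_pos h, Finset.card_insert_of_notMem (by simp)]
      have h2 := mono n
      have h3 := step n
      omega

lemma exists_factor {M : Type*} [AddCommGroup M] [Module F M] {N : Type*} [AddCommGroup N]
    [Module F N] (f : M →ₗ[F] N) (g : M →ₗ[F] F) (h : LinearMap.ker f ≤ LinearMap.ker g) :
    ∃ φ : N →ₗ[F] F, ∀ x, φ (f x) = g x := by
  obtain ⟨φ, hφ⟩ := LinearMap.exists_extend
    (((LinearMap.ker f).liftQ g h).comp (f.quotKerEquivRange).symm.toLinearMap)
  refine ⟨φ, fun x => ?_⟩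
  have h1 := congrFun (congrArg DFunLike.coe hφ) ⟨f x, LinearMap.mem_range_self f x⟩
  simp only [LinearMap.comp_apply, Submodule.subtype_apply, LinearEquiv.coe_coe,
    LinearMap.quotKerEquivRange_symm_apply_image] at h1
  rw [h1]
  simp [Submodule.mkQ_apply, Submodule.liftQ_apply]

end DynFrozen

/-- Representation of an arbitrary linear code via dynamic frozen symbols.
For a linear code `C ⊆ F_q^n` of dimension `k` and an invertible `n×n` matrix `A`, there
are `n−k` distinct indices `j_0, …, j_{n−k−1}` and coefficients `V i s` such that for all
`u ∈ F_q^n`: `uA ∈ C` iff `u_{j_i} = ∑_{s < j_i} V i s · u_s` for every `i`. -/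
theorem dynamic_frozen_representation {F : Type*} [Field F] [Fintype F] {n k : ℕ}
    (C : Submodule F (Fin n → F)) (hk : Module.finrank F C = k)
    (A : Matrix (Fin n) (Fin n) F) (hA : IsUnit A) :
    ∃ j : Fin (n - k) → Fin n, Function.Injective j ∧
      ∃ V : Fin (n - k) → Fin n → F,
        ∀ u : Fin n → F,
          Matrix.vecMul u A ∈ C ↔
            ∀ i : Fin (n - k),
              u (j i) = ∑ s : Fin n, if (s : ℕ) < (j i : ℕ) then V i s * u s else 0 := by
  classical
  have hkn : k ≤ n := by
    rw [← hk]
    simpa using Submodule.finrank_le C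
  letI : Invertible A := hA.invertible
  letI : Invertible (Matrix.transpose A) := Matrix.invertibleTranspose A
  set L : (Fin n → F) ≃ₗ[F] (Fin n → F) := Matrix.toLinearEquiv' (Matrix.transpose A) ‹Invertible (Matrix.transpose A)› with hLdef
  have hLapp : ∀ u, L u = Matrix.vecMul u A := by
    intro u
    show Matrix.toLin' (Matrix.transpose A) u = _
    rw [Matrix.toLin'_apply, Matrix.mulVec_transpose]
  set C' : Submodule F (Fin n → F) := C.comap (L : (Fin n → F) →ₗ[F] (Fin n → F)) with hC'def
  have hmemC' : ∀ u, u ∈ C' ↔ Matrix.vecMul u A ∈ C := by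
    intro u
    rw [hC'def, Submodule.mem_comap]
    simp [hLapp u]
  have hC'k : Module.finrank F C' = k := by
    rw [hC'def, Submodule.comap_equiv_eq_map_symm, LinearEquiv.finrank_map_eq]
    exact hk
  -- rank function
  set r : ℕ → ℕ := fun j => Module.finrank F (C'.map (DynFrozen.trunc F n j)) with hr
  have hr0 : r 0 = 0 := by
    have ht : DynFrozen.trunc F n 0 = 0 := by
      apply LinearMap.ext; intro u; funext s; simp [DynFrozen.trunc_apply]
    show Module.finrank F ↥(Submodule.map (DynFrozen.trunc F n 0) C') = 0
    rw [ht, Submodule.map_zero, finrank_bot]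
  have hrn : r n = k := by
    have ht : DynFrozen.trunc F n n = LinearMap.id := by
      apply LinearMap.ext; intro u; funext s; simp [DynFrozen.trunc_apply, s.isLt]
    show Module.finrank F ↥(Submodule.map (DynFrozen.trunc F n n) C') = k
    rw [ht, Submodule.map_id]
    exact hC'k
  have hcomp : ∀ j : ℕ, (DynFrozen.trunc F n j).comp (DynFrozen.trunc F n (j + 1))
      = DynFrozen.trunc F n j := by
    intro j
    apply LinearMap.ext
    intro u
    exact DynFrozen.trunc_trunc j u
  have hmapeq : ∀ j : ℕ, C'.map (DynFrozen.trunc F n j)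
      = (C'.map (DynFrozen.trunc F n (j + 1))).map (DynFrozen.trunc F n j) := by
    intro j
    rw [← Submodule.map_comp, hcomp]
  have mono : ∀ j, r j ≤ r (j + 1) := by
    intro j
    show Module.finrank F ↥(Submodule.map (DynFrozen.trunc F n j) C')
      ≤ Module.finrank F ↥(Submodule.map (DynFrozen.trunc F n (j + 1)) C')
    rw [hmapeq j]
    exact Submodule.finrank_map_le _ _
  have step : ∀ j, r (j + 1) ≤ r j + 1 := by
    intro j
    by_cases hj : j < n
    · set ej : Fin n → F := Pi.single (⟨j, hj⟩ : Fin n) 1 with hej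
      have hle : C'.map (DynFrozen.trunc F n (j + 1))
          ≤ C'.map (DynFrozen.trunc F n j) ⊔ Submodule.span F {ej} := by
        rintro x ⟨u, hu, rfl⟩
        have hdec : DynFrozen.trunc F n (j + 1) u
            = DynFrozen.trunc F n j u + u ⟨j, hj⟩ • ej := by
          funext s
          simp only [Pi.add_apply, Pi.smul_apply, DynFrozen.trunc_apply, hej,
            Pi.single_apply, smul_eq_mul]
          rcases lt_trichotomy (s : ℕ) j with h | h | h
          · have hne : s ≠ ⟨j, hj⟩ := by
              intro hc; rw [hc] at h; exact absurd h (lt_irrefl _)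
            simp [h, Nat.lt_succ_of_lt h, hne]
          · have heq : s = ⟨j, hj⟩ := Fin.ext h
            simp [heq, h]
          · have h1 : ¬ (s : ℕ) < j + 1 := by omega
            have h2 : ¬ (s : ℕ) < j := by omega
            have hne : s ≠ ⟨j, hj⟩ := by
              intro hc; rw [hc] at h; simp at h
            simp [h1, h2, hne]
        rw [hdec]
        exact Submodule.add_mem _ (Submodule.mem_sup_left ⟨u, hu, rfl⟩)
          (Submodule.mem_sup_right (Submodule.smul_mem _ _ (Submodule.mem_span_singleton_self _)))
      have hej0 : ej ≠ 0 := by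
        intro hc
        have := congrFun hc ⟨j, hj⟩
        simp [hej] at this
      have h1 : r (j + 1) ≤ Module.finrank F
          ↥(C'.map (DynFrozen.trunc F n j) ⊔ Submodule.span F {ej}) :=
        Submodule.finrank_mono hle
      have h2 := Submodule.finrank_sup_add_finrank_inf_eq
        (C'.map (DynFrozen.trunc F n j)) (Submodule.span F {ej})
      have h3 : Module.finrank F ↥(Submodule.span F {ej}) = 1 := finrank_span_singleton hej0
      have hr1 : r (j + 1) = Module.finrank F ↥(Submodule.map (DynFrozen.trunc F n (j + 1)) C') := rfl
      have hr2 : r j = Module.finrank F ↥(Submodule.map (DynFrozen.trunc F n j) C') := rfl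
      omega
    · have ht : DynFrozen.trunc F n (j + 1) = DynFrozen.trunc F n j := by
        apply LinearMap.ext; intro u; funext s
        have h1 : (s : ℕ) < j := lt_of_lt_of_le s.isLt (le_of_not_gt hj)
        simp [DynFrozen.trunc_apply, h1, Nat.lt_succ_of_lt h1]
      have hr1 : r (j + 1) = r j := by
        show Module.finrank F ↥(Submodule.map (DynFrozen.trunc F n (j + 1)) C') = _
        rw [ht]
      omega
  -- pivot property
  have pivot : ∀ (j : ℕ) (hj : j < n), r (j + 1) = r j →
      ∀ u ∈ C', (∀ s : Fin n, (s : ℕ) < j → u s = 0) → u ⟨j, hj⟩ = 0 := by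
    intro j hj hrj u hu hus
    set M1 := C'.map (DynFrozen.trunc F n (j + 1)) with hM1
    set M0 := C'.map (DynFrozen.trunc F n j) with hM0
    have hres : ∀ x ∈ M1, DynFrozen.trunc F n j x ∈ M0 := by
      rintro x ⟨v, hv, rfl⟩
      exact ⟨v, hv, (DynFrozen.trunc_trunc j v).symm⟩
    set g : M1 →ₗ[F] M0 := (DynFrozen.trunc F n j).restrict hres with hg
    have hsurj : Function.Surjective g := by
      rintro ⟨y, v, hv, rfl⟩
      refine ⟨⟨DynFrozen.trunc F n (j + 1) v, ⟨v, hv, rfl⟩⟩, ?_⟩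
      apply Subtype.ext
      exact DynFrozen.trunc_trunc j v
    have hinj : Function.Injective g :=
      (LinearMap.injective_iff_surjective_of_finrank_eq_finrank hrj).2 hsurj
    have h1 : DynFrozen.trunc F n j u = 0 := by
      funext s
      simp only [DynFrozen.trunc_apply]
      by_cases h : (s : ℕ) < j
      · simp [hus s h]
      · simp [h]
    have h2 : g ⟨DynFrozen.trunc F n (j + 1) u, ⟨u, hu, rfl⟩⟩ = 0 := by
      apply Subtype.ext
      show DynFrozen.trunc F n j (DynFrozen.trunc F n (j + 1) u) = 0
      rw [DynFrozen.trunc_trunc, h1]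
    have h3 : DynFrozen.trunc F n (j + 1) u = 0 := by
      have := hinj (a₁ := ⟨DynFrozen.trunc F n (j + 1) u, ⟨u, hu, rfl⟩⟩) (a₂ := 0)
        (by rw [h2, map_zero])
      exact congrArg Subtype.val this
    have h4 := congrFun h3 ⟨j, hj⟩
    simpa [DynFrozen.trunc_apply] using h4
  -- counting
  have hcard : ((Finset.range n).filter (fun j => r (j + 1) = r j)).card = n - k := by
    have h1 := DynFrozen.count_incr mono step n
    rw [hr0, hrn] at h1
    have h2 := Finset.card_filter_add_card_filter_not
      (s := Finset.range n) (p := fun j => r (j + 1) = r j)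
    rw [Finset.card_range] at h2
    omega
  set J : Finset (Fin n) := Finset.univ.filter (fun j : Fin n => r ((j : ℕ) + 1) = r (j : ℕ))
    with hJdef
  have hJcard : J.card = n - k := by
    rw [← hcard]
    apply Finset.card_bij (fun (a : Fin n) _ => (a : ℕ))
    · intro a ha
      rw [hJdef, Finset.mem_filter] at ha
      simp [a.isLt, ha.2]
    · intro a _ b _ hab
      exact Fin.ext hab
    · intro b hb
      rw [Finset.mem_filter, Finset.mem_range] at hb
      exact ⟨⟨b, hb.1⟩, by simp [hJdef, hb.2], rfl⟩
  set e := J.orderIsoOfFin hJcard with he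
  set j : Fin (n - k) → Fin n := fun i => (e i : Fin n) with hjdef
  have hjinj : Function.Injective j := by
    intro a b hab
    exact e.injective (Subtype.ext hab)
  have hjmem : ∀ i, j i ∈ J := fun i => (e i).2
  have hjsurj : ∀ x ∈ J, ∃ i, j i = x := by
    intro x hx
    exact ⟨e.symm ⟨x, hx⟩, by simp [hjdef]⟩
  have hjr : ∀ i, r ((j i : ℕ) + 1) = r (j i : ℕ) := by
    intro i
    have := hjmem i
    rw [hJdef, Finset.mem_filter] at this
    exact this.2
  -- the functionals
  have hphi : ∀ i : Fin (n - k), ∃ φ : (Fin n → F) →ₗ[F] F,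
      ∀ x : C', φ (DynFrozen.trunc F n (j i : ℕ) (x : Fin n → F)) = (x : Fin n → F) (j i) := by
    intro i
    have hker : LinearMap.ker ((DynFrozen.trunc F n (j i : ℕ)).comp C'.subtype)
        ≤ LinearMap.ker ((LinearMap.proj (j i) : (Fin n → F) →ₗ[F] F).comp C'.subtype) := by
      intro x hx
      rw [LinearMap.mem_ker, LinearMap.comp_apply] at hx ⊢
      have hzero : ∀ s : Fin n, (s : ℕ) < (j i : ℕ) → (x : Fin n → F) s = 0 := by
        intro s hs
        have := congrFun hx s
        simpa [DynFrozen.trunc_apply, hs] using this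
      have := pivot (j i : ℕ) (j i).isLt (hjr i) (x : Fin n → F) x.2 hzero
      simpa [LinearMap.proj_apply, Fin.eta] using this
    obtain ⟨φ, hφ⟩ := DynFrozen.exists_factor _ _ hker
    exact ⟨φ, fun x => by simpa [LinearMap.proj_apply] using hφ x⟩
  choose φ hφ using hphi
  set V : Fin (n - k) → Fin n → F := fun i s => φ i (fun t => if s = t then 1 else 0) with hV
  have hsum : ∀ (i : Fin (n - k)) (u : Fin n → F),
      (∑ s : Fin n, if (s : ℕ) < (j i : ℕ) then V i s * u s else 0)
        = φ i (DynFrozen.trunc F n (j i : ℕ) u) := by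
    intro i u
    rw [LinearMap.pi_apply_eq_sum_univ (φ i) (DynFrozen.trunc F n (j i : ℕ) u)]
    apply Finset.sum_congr rfl
    intro s _
    simp only [DynFrozen.trunc_apply, hV, smul_eq_mul]
    by_cases h : (s : ℕ) < (j i : ℕ)
    · simp [h, mul_comm]
    · simp [h]
  -- the submodule cut out by the constraints
  set D : Submodule F (Fin n → F) := ⨅ i : Fin (n - k),
    LinearMap.ker ((LinearMap.proj (j i) : (Fin n → F) →ₗ[F] F)
      - (φ i).comp (DynFrozen.trunc F n (j i : ℕ))) with hDdef
  have hmemD : ∀ u, u ∈ D ↔ ∀ i, u (j i) = φ i (DynFrozen.trunc F n (j i : ℕ) u) := by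
    intro u
    rw [hDdef, Submodule.mem_iInf]
    apply forall_congr'
    intro i
    rw [LinearMap.mem_ker, LinearMap.sub_apply, sub_eq_zero, LinearMap.comp_apply,
      LinearMap.proj_apply]
  have hC'D : C' ≤ D := by
    intro u hu
    rw [hmemD]
    intro i
    exact (hφ i ⟨u, hu⟩).symm
  have hDinj : ∀ u ∈ D, (∀ s : Fin n, s ∉ J → u s = 0) → u = 0 := by
    intro u hu hfree
    have key : ∀ m : ℕ, ∀ s : Fin n, (s : ℕ) < m → u s = 0 := by
      intro m
      induction m with
      | zero => intro s hs; omega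
      | succ m ih =>
        intro s hs
        rcases Nat.lt_or_ge (s : ℕ) m with h | h
        · exact ih s h
        · by_cases hsJ : s ∈ J
          · obtain ⟨i, hi⟩ := hjsurj s hsJ
            have hcon := (hmemD u).1 hu i
            rw [hi] at hcon
            have htz : DynFrozen.trunc F n (s : ℕ) u = 0 := by
              funext t
              simp only [DynFrozen.trunc_apply]
              by_cases ht : (t : ℕ) < (s : ℕ)
              · simp [ih t (by omega)]
              · simp [ht]
            rw [hcon, htz, map_zero]
          · exact hfree s hsJ
    funext s
    exact key n s s.isLt
  have hDfin : Module.finrank F D ≤ k := by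
    set ρ : (Fin n → F) →ₗ[F] ({x : Fin n // x ∉ J} → F) :=
      LinearMap.funLeft F F (fun x => (x : Fin n)) with hρ
    have hinj : Function.Injective (ρ.comp D.subtype) := by
      rw [injective_iff_map_eq_zero]
      intro x hx
      apply Subtype.ext
      apply hDinj _ x.2
      intro s hs
      have := congrFun hx ⟨s, hs⟩
      simpa [hρ, LinearMap.funLeft_apply] using this
    have h1 := LinearMap.finrank_le_finrank_of_injective hinj
    have h2 : Module.finrank F ({x : Fin n // x ∉ J} → F) = k := by
      rw [Module.finrank_pi]
      have h3 : Fintype.card {x : Fin n // x ∉ J} = n - J.card := by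
        rw [Fintype.card_subtype_compl, Fintype.card_fin]
        congr 1
        exact Fintype.card_coe J
      rw [h3, hJcard]
      omega
    rw [h2] at h1
    exact h1
  have hC'eqD : C' = D :=
    Submodule.eq_of_le_of_finrank_le hC'D (by rw [hC'k]; exact hDfin)
  refine ⟨j, hjinj, V, fun u => ?_⟩
  rw [← hmemC' u, hC'eqD, hmemD u]
  exact forall_congr' fun i => by rw [hsum i u]
end

section
/- Let F be a field and W a linear subspace of F^n (coordinates indexed 0,…,n−1). Then the set L(W) = { last(v) : v ∈ W, v ≠ 0 }, where last(v) is the largest index t with v_t ≠ 0, has cardinality exactly dim W. -/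
/-!
For each `t ∈ L(W)` choose `v_t ∈ W` with `last(v_t) = t`. This family is in echelon form, so it
is linearly independent: in a vanishing combination, the term with the largest last position among
those with a nonzero coefficient cannot be cancelled. It also spans `W`: for `w ∈ W` with
`last(w) = t`, subtracting a multiple of `v_t` kills position `t`, so `w - c • v_t` is zero or has a
smaller last position, and induction on that position applies.
-/

def IsLastNonzero {ι M : Type*} [LT ι] [Zero M] (v : ι → M) (t : ι) : Prop :=
  v t ≠ 0 ∧ ∀ s, t < s → v s = 0

namespace IsLastNonzero

theorem ne_zero {ι M : Type*} [LT ι] [Zero M] {v : ι → M} {t : ι} (h : IsLastNonzero v t) :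
    v ≠ 0 :=
  fun hv => h.1 (congrFun hv t)

variable {ι M : Type*} [LinearOrder ι] [Zero M]

theorem lt_of_forall_le_eq_zero {v : ι → M} {t u : ι} (h : IsLastNonzero v u)
    (hv : ∀ s, t ≤ s → v s = 0) : u < t :=
  lt_of_not_ge fun htu => h.1 (hv u htu)

theorem exists_of_ne_zero [Finite ι] {v : ι → M} (hv : v ≠ 0) : ∃ t, IsLastNonzero v t := by
  obtain ⟨s, hs⟩ := Function.ne_iff.1 hv
  obtain ⟨t, ht, hmax⟩ := (Set.toFinite (Function.support v)).exists_maximal ⟨s, hs⟩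
  exact ⟨t, ht, fun s hts => not_not.1 fun hs => (hmax hs hts.le).not_gt hts⟩

end IsLastNonzero

section Echelon

variable {ι κ : Type*} [LinearOrder ι]

theorem linearIndependent_of_isLastNonzero {R : Type*} [Ring R] [NoZeroDivisors R]
    {v : κ → ι → R} {f : κ → ι} (hf : Function.Injective f)
    (hv : ∀ k, IsLastNonzero (v k) (f k)) : LinearIndependent R v := by
  classical
  rw [linearIndependent_iff']
  intro s g hsum i hi
  by_contra hgi
  set T := s.filter (fun j => g j ≠ 0)
  obtain ⟨m, hmT, hmax⟩ := T.exists_max_image f ⟨i, Finset.mem_filter.2 ⟨hi, hgi⟩⟩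
  obtain ⟨hms, hgm⟩ := Finset.mem_filter.1 hmT
  have hsum_at : ∑ j ∈ s, g j * v j (f m) = g m * v m (f m) := by
    refine Finset.sum_eq_single_of_mem m hms fun j hj hjm => ?_
    by_cases hgj : g j = 0
    · rw [hgj, zero_mul]
    · have hlt : f j < f m :=
        (hmax j (Finset.mem_filter.2 ⟨hj, hgj⟩)).lt_of_ne (hf.ne hjm)
      rw [(hv j).2 _ hlt, mul_zero]
  have hzero : ∑ j ∈ s, g j * v j (f m) = 0 := by
    simpa only [Finset.sum_apply, Pi.smul_apply, smul_eq_mul, Pi.zero_apply] using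
      congrFun hsum (f m)
  exact mul_ne_zero hgm (hv m).1 (hsum_at ▸ hzero)

theorem le_span_of_isLastNonzero [Finite ι] {K : Type*} [DivisionRing K]
    {W : Submodule K (ι → K)} {v : κ → ι → K} {f : κ → ι} (hvW : ∀ k, v k ∈ W)
    (hv : ∀ k, IsLastNonzero (v k) (f k)) (hW : ∀ w ∈ W, ∀ t, IsLastNonzero w t → ∃ k, f k = t) :
    W ≤ Submodule.span K (Set.range v) := by
  intro w hw
  rcases eq_or_ne w 0 with rfl | hw0
  · exact zero_mem _
  obtain ⟨t, ht⟩ := IsLastNonzero.exists_of_ne_zero hw0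
  induction t using WellFoundedLT.induction generalizing w with
  | _ t ih =>
    obtain ⟨k, rfl⟩ := hW w hw _ ht
    set w' := w - (w (f k) * (v k (f k))⁻¹) • v k
    have hvk : v k ∈ Submodule.span K (Set.range v) := Submodule.subset_span ⟨k, rfl⟩
    have hw' : w' ∈ Submodule.span K (Set.range v) := by
      rcases eq_or_ne w' 0 with h0 | h0
      · rw [h0]; exact zero_mem _
      have hvan : ∀ s, f k ≤ s → w' s = 0 := by
        intro s hs
        rcases hs.eq_or_lt with rfl | hlt
        · simp [w', (hv k).1]
        · simp [w', ht.2 s hlt, (hv k).2 s hlt]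
      obtain ⟨u, hu⟩ := IsLastNonzero.exists_of_ne_zero h0
      exact ih u (hu.lt_of_forall_le_eq_zero hvan) (sub_mem hw (W.smul_mem _ (hvW k))) h0 hu
    simpa [w'] using add_mem hw' (Submodule.smul_mem _ (w (f k) * (v k (f k))⁻¹) hvk)

end Echelon

/-- For a linear subspace `W` of `F^n`, the set
`L(W) = { last(v) : v ∈ W, v ≠ 0 }` of last nonzero positions of nonzero vectors of `W`
has cardinality exactly `dim W`. -/
theorem card_lastSet_eq_finrank {F : Type*} [Field F] {n : ℕ}
    (W : Submodule F (Fin n → F)) :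
    Set.ncard {t : Fin n | ∃ v ∈ W, v ≠ 0 ∧ v t ≠ 0 ∧ ∀ s, t < s → v s = 0} =
      Module.finrank F W := by
  classical
  set S := {t : Fin n | ∃ v ∈ W, v ≠ 0 ∧ v t ≠ 0 ∧ ∀ s, t < s → v s = 0}
  have hS : ∀ t : S, ∃ v ∈ W, IsLastNonzero v t := fun ⟨_, v, hvW, _, hv⟩ => ⟨v, hvW, hv⟩
  choose v hvW hv using hS
  have hspan : Submodule.span F (Set.range v) = W :=
    le_antisymm (Submodule.span_le.2 (Set.range_subset_iff.2 hvW))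
      (le_span_of_isLastNonzero hvW hv
        fun w hw t ht => ⟨⟨t, w, hw, ht.ne_zero, ht⟩, rfl⟩)
  rw [← Nat.card_coe_set_eq, ← hspan, finrank_span_eq_card
    (linearIndependent_of_isLastNonzero Subtype.val_injective hv), Nat.card_eq_fintype_card]
end

section
/- Let F_q be a finite field, A an invertible n×n matrix over F_q, and C' ⊆ F_q^n a linear code of dimension k' all of whose nonzero codewords have Hamming weight at least d. Let F' = F_A(C') be its dynamic frozen index set, and let T ⊆ {0,…,n−1} be any set of indices with T ∩ F' = ∅ and |T| = k' − k for some 0 ≤ k ≤ k'. Then the polar subcode C = { uA : u ∈ F_q^n, uA ∈ C', and u_s = 0 for all s ∈ T } is a linear subcode of C' of dimension exactly k, and every nonzero codeword of C has Hamming weight at least d. -/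
/-- The dynamic frozen index set `F_A(C)` of a linear code `C ⊆ F_q^n` with respect to an
invertible matrix `A`: the set of indices `t` that arise as the last nonzero position of
some nonzero vector `v` in the orthogonal complement (w.r.t. the standard bilinear form)
of the subspace `{u : uA ∈ C}`. -/
def frozenSet {F : Type*} [Field F] {n : ℕ} (A : Matrix (Fin n) (Fin n) F)
    (C : Submodule F (Fin n → F)) : Set (Fin n) :=
  {t | ∃ v : Fin n → F,
    (∀ u : Fin n → F, Matrix.vecMul u A ∈ C → ∑ s, u s * v s = 0) ∧
    v ≠ 0 ∧ v t ≠ 0 ∧ ∀ s, t < s → v s = 0}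

/-! The preimage `B = {u : uA ∈ C'}` has dimension `k'`, and `C` is the image under `u ↦ uA` of
`B ∩ V_T`, where `V_T = {u : u_s = 0 for s ∈ T}` has codimension `|T|`. The vectors orthogonal
to `B + V_T` are the vectors of `B^⊥` supported on `T`; a nonzero one would have its last nonzero
index in `T ∩ F_A(C')`. Hence `B + V_T` is the whole space and `dim (B ∩ V_T) = k' - |T| = k`. -/

open Matrix LinearMap

theorem Function.exists_ne_zero_and_forall_gt_eq_zero {ι M : Type*} [LinearOrder ι] [Finite ι]
    [Zero M] {v : ι → M} (hv : v ≠ 0) : ∃ t, v t ≠ 0 ∧ ∀ s, t < s → v s = 0 := by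
  obtain ⟨t, ht, hmax⟩ :=
    (Set.toFinite (Function.support v)).exists_maximal (Function.support_nonempty_iff.2 hv)
  refine ⟨t, ht, fun s hts => ?_⟩
  by_contra hs
  exact (hmax hs hts.le).not_gt hts

theorem LinearMap.mem_ker_funLeft_subtypeVal {R M ι : Type*} [Semiring R] [AddCommMonoid M]
    [Module R M] {T : Finset ι} {u : ι → M} :
    u ∈ ker (funLeft R M ((↑) : T → ι)) ↔ ∀ s ∈ T, u s = 0 := by
  simp [funext_iff]

theorem LinearMap.finrank_ker_funLeft_subtypeVal {K ι : Type*} [Field K] [Fintype ι]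
    (T : Finset ι) :
    Module.finrank K (ker (funLeft K K ((↑) : T → ι))) = Fintype.card ι - T.card := by
  have h := finrank_range_add_finrank_ker (funLeft K K ((↑) : T → ι))
  rw [range_eq_top.2 (funLeft_surjective_of_injective K K _ Subtype.val_injective),
    finrank_top, Module.finrank_fintype_fun_eq_card, Fintype.card_coe,
    Module.finrank_fintype_fun_eq_card] at h
  omega

theorem LinearMap.eq_zero_off_of_forall_mem_ker_funLeft_dotProduct_eq_zero {K ι : Type*}
    [Field K] [Fintype ι] {T : Finset ι} {v : ι → K}
    (hv : ∀ u ∈ ker (funLeft K K ((↑) : T → ι)), u ⬝ᵥ v = 0) : ∀ s ∉ T, v s = 0 := by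
  classical
  intro s hs
  rw [← single_one_dotProduct s v]
  refine hv _ (mem_ker_funLeft_subtypeVal.2 fun t ht => ?_)
  exact Pi.single_eq_of_ne (ne_of_mem_of_not_mem ht hs) 1

theorem Submodule.eq_top_of_forall_dotProduct_eq_zero {K ι : Type*} [Field K] [Fintype ι]
    (W : Submodule K (ι → K)) (h : ∀ v, (∀ w ∈ W, w ⬝ᵥ v = 0) → v = 0) : W = ⊤ := by
  classical
  by_contra hW
  obtain ⟨φ, hφ, hWφ⟩ := W.exists_dual_map_eq_bot_of_lt_top (lt_top_iff_ne_top.2 hW) inferInstance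
  apply hφ
  suffices (dotProductEquiv K ι).symm φ = 0 by simpa using congrArg (dotProductEquiv K ι) this
  refine h _ fun w hw => ?_
  have hφw : φ w = 0 := (Submodule.mem_bot K).1 (hWφ ▸ Submodule.mem_map_of_mem hw)
  rw [dotProduct_comm, ← hφw, ← dotProductEquiv_apply_apply, LinearEquiv.apply_symm_apply]

theorem exists_mem_frozenSet_of_eq_zero_off {F : Type*} [Field F] {n : ℕ}
    {A : Matrix (Fin n) (Fin n) F} {C : Submodule F (Fin n → F)} {T : Finset (Fin n)}
    {v : Fin n → F} (hv : ∀ u, vecMul u A ∈ C → u ⬝ᵥ v = 0) (hv0 : v ≠ 0)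
    (hvT : ∀ s ∉ T, v s = 0) : ∃ t ∈ T, t ∈ frozenSet A C := by
  obtain ⟨t, ht, hlast⟩ := Function.exists_ne_zero_and_forall_gt_eq_zero hv0
  exact ⟨t, by_contra fun htT => ht (hvT t htT), v, hv, hv0, ht, hlast⟩

theorem comap_vecMulLinear_sup_ker_funLeft_eq_top {F : Type*} [Field F] {n : ℕ}
    (A : Matrix (Fin n) (Fin n) F) (C : Submodule F (Fin n → F)) (T : Finset (Fin n))
    (hT : ∀ t ∈ T, t ∉ frozenSet A C) :
    C.comap A.vecMulLinear ⊔ ker (funLeft F F ((↑) : T → Fin n)) = ⊤ := by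
  refine Submodule.eq_top_of_forall_dotProduct_eq_zero _ fun v hv => ?_
  by_contra hv0
  obtain ⟨t, htT, ht⟩ := exists_mem_frozenSet_of_eq_zero_off
    (fun u hu => hv u (Submodule.mem_sup_left hu)) hv0
    (eq_zero_off_of_forall_mem_ker_funLeft_dotProduct_eq_zero
      fun u hu => hv u (Submodule.mem_sup_right hu))
  exact hT t htT ht

theorem Submodule.finrank_inf_ker_funLeft_of_sup_eq_top {K ι : Type*} [Field K] [Fintype ι]
    {B : Submodule K (ι → K)} {T : Finset ι}
    (h : B ⊔ ker (funLeft K K ((↑) : T → ι)) = ⊤) :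
    Module.finrank K ↥(B ⊓ ker (funLeft K K ((↑) : T → ι))) = Module.finrank K B - T.card := by
  have h_grassmann := Submodule.finrank_sup_add_finrank_inf_eq B (ker (funLeft K K ((↑) : T → ι)))
  rw [h, finrank_top, finrank_ker_funLeft_subtypeVal, Module.finrank_fintype_fun_eq_card]
    at h_grassmann
  have := T.card_le_univ
  omega

theorem polar_subcode_dim_and_dist_general {F : Type*} [Field F] [DecidableEq F]
    {n k k' d : ℕ}
    (A : Matrix (Fin n) (Fin n) F) (hA : IsUnit A)
    (C' : Submodule F (Fin n → F)) (hk' : Module.finrank F C' = k')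
    (hd : ∀ c ∈ C', c ≠ 0 → d ≤ hammingNorm c)
    (T : Finset (Fin n)) (hTF : ∀ t ∈ T, t ∉ frozenSet A C')
    (hk : k ≤ k') (hT : T.card = k' - k) :
    ∃ C : Submodule F (Fin n → F),
      (C : Set (Fin n → F)) =
        {c | ∃ u : Fin n → F, c = Matrix.vecMul u A ∧ c ∈ C' ∧ ∀ s ∈ T, u s = 0} ∧
      C ≤ C' ∧ Module.finrank F C = k ∧
      ∀ c ∈ C, c ≠ 0 → d ≤ hammingNorm c := by
  have hinj : Function.Injective A.vecMulLinear := vecMul_injective_iff_isUnit.2 hA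
  set B := C'.comap A.vecMulLinear
  set P := B ⊓ ker (funLeft F F ((↑) : T → Fin n))
  have hB : Module.finrank F B = k' := by
    rw [← hk', ← Submodule.map_comap_eq_of_surjective
      (f := A.vecMulLinear) (vecMul_surjective_iff_isUnit.2 hA) C']
    exact (Submodule.equivMapOfInjective _ hinj B).finrank_eq
  have hP : Module.finrank F P = k := by
    rw [Submodule.finrank_inf_ker_funLeft_of_sup_eq_top
      (comap_vecMulLinear_sup_ker_funLeft_eq_top A C' T hTF), hB]
    omega
  have hPC' : P.map A.vecMulLinear ≤ C' := Submodule.map_le_iff_le_comap.2 inf_le_left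
  refine ⟨P.map A.vecMulLinear, ?_, hPC', ?_, fun c hc => hd c (hPC' hc)⟩
  · ext c
    constructor
    · rintro ⟨u, ⟨huC, huT⟩, rfl⟩
      exact ⟨u, rfl, huC, mem_ker_funLeft_subtypeVal.1 huT⟩
    · rintro ⟨u, rfl, huC, huT⟩
      exact ⟨u, ⟨huC, mem_ker_funLeft_subtypeVal.2 huT⟩, rfl⟩
  · rw [← (Submodule.equivMapOfInjective _ hinj P).finrank_eq, hP]

/-- Polar subcodes. Let `C'` be an `(n, k', d)` code (every nonzero codeword
has weight at least `d`), `A` invertible, `F' = F_A(C')` its dynamic frozen index set, and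
`T` a set of indices disjoint from `F'` with `|T| = k' − k`, `k ≤ k'`. Then the polar
subcode `C = { uA : uA ∈ C', u_s = 0 for all s ∈ T }` is a linear subcode of `C'` of
dimension exactly `k`, and every nonzero codeword of `C` has Hamming weight at least `d`. -/
theorem polar_subcode_dim_and_dist {F : Type*} [Field F] [Fintype F] [DecidableEq F]
    {n k k' d : ℕ}
    (A : Matrix (Fin n) (Fin n) F) (hA : IsUnit A)
    (C' : Submodule F (Fin n → F)) (hk' : Module.finrank F C' = k')
    (hd : ∀ c ∈ C', c ≠ 0 → d ≤ hammingNorm c)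
    (T : Finset (Fin n)) (hTF : ∀ t ∈ T, t ∉ frozenSet A C')
    (hk : k ≤ k') (hT : T.card = k' - k) :
    ∃ C : Submodule F (Fin n → F),
      (C : Set (Fin n → F)) =
        {c | ∃ u : Fin n → F, c = Matrix.vecMul u A ∧ c ∈ C' ∧ ∀ s ∈ T, u s = 0} ∧
      C ≤ C' ∧ Module.finrank F C = k ∧
      ∀ c ∈ C, c ≠ 0 → d ≤ hammingNorm c :=
  polar_subcode_dim_and_dist_general A hA C' hk' hd T hTF hk hT
end

section
/- Let F be the Arikan kernel over F_2, m ≥ 1, A = F^{⊗m}, and 0 ≤ r < m. Let R_r ⊆ F_2^{2^m} be the linear span of the rows of A whose indices i satisfy wt(i) > r (this is the Reed–Muller code of order m−r−1 and length 2^m). Then the dynamic frozen index set of R_r with respect to A satisfies F_A(R_r) = { i : 0 ≤ i < 2^m, wt(i) ≤ r }; that is, the Reed–Muller code of order m−r−1 is the polar code with frozen symbol index set { i : wt(i) ≤ r }. -/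
/-- The binary weight `wt i`: the number of ones in the binary expansion of `i`. -/
def wt (i : ℕ) : ℕ := (Nat.digits 2 i).sum

/-- The Arikan kernel: the 2×2 matrix over `F_2` with rows `(1,0)` and `(1,1)`. -/
def arikanKernel : Matrix (Fin 2) (Fin 2) (ZMod 2) := !![1, 0; 1, 1]

/-- The `m`-fold Kronecker power of the Arikan kernel, a `2^m × 2^m` matrix over `F_2`.
The index pair `(a, b)` of the Kronecker product `F ⊗ F^{⊗m}` is identified with the
integer `a·2^m + b`, i.e. `a = i / 2^m` and `b = i % 2^m`. -/
def arikanKronPow : (m : ℕ) → Matrix (Fin (2 ^ m)) (Fin (2 ^ m)) (ZMod 2)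
  | 0 => 1
  | m + 1 => Matrix.of fun i j =>
      arikanKernel ⟨i.val / 2 ^ m, Nat.div_lt_of_lt_mul (by rw [← pow_succ]; exact i.isLt)⟩
          ⟨j.val / 2 ^ m, Nat.div_lt_of_lt_mul (by rw [← pow_succ]; exact j.isLt)⟩ *
        arikanKronPow m ⟨i.val % 2 ^ m, Nat.mod_lt _ (by positivity)⟩
          ⟨j.val % 2 ^ m, Nat.mod_lt _ (by positivity)⟩

/-! `F^{⊗m}` is lower unitriangular, hence invertible, so `u ↦ uA` maps the vectors supported
on `{i : wt i > r}` bijectively onto the Reed–Muller code spanned by the rows of those indices.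
The orthogonal complement of that coordinate subspace is the coordinate subspace on
`{i : wt i ≤ r}`, whose last nonzero positions are exactly its indices (witnessed by the unit
vectors). -/

open Matrix Submodule

lemma arikanKernel_apply_self (a : Fin 2) : arikanKernel a a = 1 := by
  fin_cases a <;> rfl

lemma arikanKernel_isLowerTriangular : arikanKernel.IsLowerTriangular := by
  intro a b (hab : a < b)
  fin_cases a <;> fin_cases b <;> simp_all [arikanKernel]

lemma arikanKronPow_apply_self (m : ℕ) (i : Fin (2 ^ m)) : arikanKronPow m i i = 1 := by
  induction m with
  | zero => simp [arikanKronPow]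
  | succ m ih => simp only [arikanKronPow, of_apply, arikanKernel_apply_self, ih, mul_one]

lemma arikanKronPow_isLowerTriangular (m : ℕ) : (arikanKronPow m).IsLowerTriangular := by
  induction m with
  | zero =>
    intro i j (hij : i < j)
    have := j.isLt
    simp only [pow_zero] at this
    omega
  | succ m ih =>
    intro i j (hij : i < j)
    simp only [arikanKronPow, of_apply]
    rcases (Nat.div_le_div_right (c := 2 ^ m) hij.le).lt_or_eq with hdiv | hdiv
    · rw [arikanKernel_isLowerTriangular (show (⟨_, _⟩ : Fin 2) < ⟨_, _⟩ from hdiv), zero_mul]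
    · have hmod : i.val % 2 ^ m < j.val % 2 ^ m := by
        have := Nat.div_add_mod i.val (2 ^ m)
        have := Nat.div_add_mod j.val (2 ^ m)
        have : i.val < j.val := hij
        rw [hdiv] at *
        omega
      rw [ih (show (⟨_, _⟩ : Fin (2 ^ m)) < ⟨_, _⟩ from hmod), mul_zero]

lemma arikanKronPow_det (m : ℕ) : (arikanKronPow m).det = 1 := by
  rw [det_of_isLowerTriangular _ (arikanKronPow_isLowerTriangular m)]
  exact Finset.prod_eq_one fun i _ ↦ arikanKronPow_apply_self m i

lemma isUnit_arikanKronPow (m : ℕ) : IsUnit (arikanKronPow m) :=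
  (isUnit_iff_isUnit_det _).2 (by rw [arikanKronPow_det]; exact isUnit_one)

section SpanRows

variable {F : Type*} [Field F] {n : ℕ} {A : Matrix (Fin n) (Fin n) F} (p : Fin n → Prop)

lemma vecMul_mem_span_rows_iff (hA : IsUnit A) (u : Fin n → F) :
    u ᵥ* A ∈ span F {v | ∃ i, p i ∧ v = A i} ↔ ∀ s, ¬ p s → u s = 0 := by
  classical
  constructor
  · intro hu
    have hle : span F {v | ∃ i, p i ∧ v = A i} ≤
        (Submodule.pi {s | ¬ p s} fun _ ↦ ⊥).map A.vecMulLinear := by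
      refine span_le.2 ?_
      rintro v ⟨i, hi, rfl⟩
      refine ⟨Pi.single i 1, fun s hs ↦ ?_, single_one_vecMul i A⟩
      rw [Pi.single_eq_of_ne (fun h : s = i ↦ hs (h ▸ hi))]
      exact zero_mem _
    obtain ⟨u', hu', hu'u⟩ := hle hu
    obtain rfl : u' = u := vecMul_injective_iff_isUnit.2 hA hu'u
    exact hu'
  · intro hu
    rw [vecMul_eq_sum]
    refine sum_mem fun s _ ↦ ?_
    by_cases hs : p s
    · exact smul_mem _ _ (subset_span ⟨s, hs, rfl⟩)
    · simp [hu s hs]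

theorem frozenSet_span_rows (hA : IsUnit A) :
    frozenSet A (span F {v | ∃ i, p i ∧ v = A i}) = {t | ¬ p t} := by
  classical
  ext t
  constructor
  · rintro ⟨v, hperp, -, hvt, -⟩ ht
    refine hvt ?_
    have := hperp (Pi.single t 1) ((vecMul_mem_span_rows_iff p hA _).2 fun s hs ↦
      Pi.single_eq_of_ne (fun h : s = t ↦ hs (h ▸ ht)) 1)
    rwa [← dotProduct, single_dotProduct, one_mul] at this
  · intro ht
    refine ⟨Pi.single t 1, fun u hu ↦ ?_, by simp, by simp, fun s hs ↦ Pi.single_eq_of_ne hs.ne' 1⟩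
    rw [← dotProduct, dotProduct_single, (vecMul_mem_span_rows_iff p hA u).1 hu t ht, zero_mul]

end SpanRows

theorem frozenSet_reed_muller_general {m r : ℕ} :
    frozenSet (arikanKronPow m)
      (Submodule.span (ZMod 2)
        {v | ∃ i : Fin (2 ^ m), r < wt i.val ∧ v = arikanKronPow m i}) =
      {i : Fin (2 ^ m) | wt i.val ≤ r} := by
  simpa only [not_lt] using frozenSet_span_rows (fun i ↦ r < wt i.val) (isUnit_arikanKronPow m)

/-- Let `A = F^{⊗m}` and let `R_r` be the span of the rows of `A` whose
indices have binary weight `> r` (the Reed–Muller code of order `m−r−1`). Then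
`F_A(R_r) = { i : wt(i) ≤ r }`: the Reed–Muller code is the polar code with frozen symbol
index set `{ i : wt(i) ≤ r }`. -/
theorem frozenSet_reed_muller {m r : ℕ} (hm : 1 ≤ m) (hr : r < m) :
    frozenSet (arikanKronPow m)
      (Submodule.span (ZMod 2)
        {v | ∃ i : Fin (2 ^ m), r < wt i.val ∧ v = arikanKronPow m i}) =
      {i : Fin (2 ^ m) | wt i.val ≤ r} :=
  frozenSet_reed_muller_general
end

section
/- Let F_q be a finite field, G an invertible n×n matrix over F_q, and for each 0 ≤ i < n let G^{(i)} ∈ F_q^{K_i × N} be a matrix of rank K_i, and for each pair 0 ≤ s < i < n let M^{(s,i)} ∈ F_q^{K_s × N} be an arbitrary matrix. Consider the linear map sending a tuple (u^{(0)}, …, u^{(n−1)}) ∈ F_q^{K_0} × ⋯ × F_q^{K_{n−1}} to the n×N matrix GᵀB, where B is the n×N matrix whose i-th row equals u^{(i)}G^{(i)} + Σ_{s=0}^{i−1} u^{(s)}M^{(s,i)}. Then this map is injective; consequently, the interlinked generalized concatenated code (its image) is a linear code of length nN and dimension Σ_{i=0}^{n−1} K_i. -/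
/-!
Since `Gᵀ` is invertible, a codeword determines the matrix `B`. The rows of `B` form a block
lower-triangular system: row `i` is `u⁽ⁱ⁾ G⁽ⁱ⁾` plus terms in the earlier blocks only, and
`v ↦ v G⁽ⁱ⁾` is injective because `G⁽ⁱ⁾` has full row rank. So the blocks `u⁽ⁱ⁾` are recovered
one after another, the encoder is an injective linear map, and its image has the dimension
`∑ Kᵢ` of its domain.
-/

open Matrix

theorem Matrix.linearIndependent_row_iff_rank_eq_card {R m n : Type*} [Field R] [Fintype m]
    [Fintype n] {A : Matrix m n R} : LinearIndependent R A.row ↔ A.rank = Fintype.card m := by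
  rw [A.rank_eq_finrank_span_row, linearIndependent_iff_card_eq_finrank_span, Set.finrank,
    eq_comm]

theorem eq_zero_of_triangular_eq_zero {ι : Type*} [LinearOrder ι] [WellFoundedLT ι] [Fintype ι]
    {V W : ι → Type*} [∀ i, Zero (V i)] [∀ i, AddCommMonoid (W i)]
    (D : ∀ i, V i → W i) (hD : ∀ i v, D i v = 0 → v = 0)
    (C : ∀ s i, V s → W i) (hC : ∀ s i, C s i 0 = 0) (u : ∀ i, V i)
    (hu : ∀ i, D i (u i) + ∑ s ∈ Finset.univ.filter (· < i), C s i (u s) = 0) :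
    u = 0 := by
  funext i
  induction i using WellFoundedLT.induction with
  | _ i ih =>
    have hsum : ∑ s ∈ Finset.univ.filter (· < i), C s i (u s) = 0 :=
      Finset.sum_eq_zero fun s hs => by rw [ih s (Finset.mem_filter.mp hs).2, Pi.zero_apply, hC]
    exact hD i _ (by simpa [hsum] using hu i)

section Encoder

variable {F : Type*} [Field F] {n N : ℕ} {K : Fin n → ℕ}

def igccEncode (G : Matrix (Fin n) (Fin n) F) (G' : (i : Fin n) → Matrix (Fin (K i)) (Fin N) F)
    (M : (s i : Fin n) → Matrix (Fin (K s)) (Fin N) F) :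
    ((i : Fin n) → Fin (K i) → F) →ₗ[F] Matrix (Fin n) (Fin N) F :=
  mulLeftLinearMap (Fin N) F Gᵀ ∘ₗ (ofLinearEquiv F).toLinearMap ∘ₗ
    LinearMap.pi fun i => vecMulLinear (G' i) ∘ₗ LinearMap.proj i +
      ∑ s ∈ Finset.univ.filter (· < i), vecMulLinear (M s i) ∘ₗ LinearMap.proj s

theorem igccEncode_apply (G : Matrix (Fin n) (Fin n) F)
    (G' : (i : Fin n) → Matrix (Fin (K i)) (Fin N) F)
    (M : (s i : Fin n) → Matrix (Fin (K s)) (Fin N) F) (u : (i : Fin n) → Fin (K i) → F) :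
    igccEncode G G' M u = Gᵀ * of fun i =>
      vecMul (u i) (G' i) + ∑ s ∈ Finset.univ.filter (· < i), vecMul (u s) (M s i) := by
  simp only [igccEncode, LinearMap.comp_apply, mulLeftLinearMap_apply, LinearEquiv.coe_coe,
    coe_ofLinearEquiv]
  congr 1
  ext i j
  simp [LinearMap.sum_apply]

theorem igccEncode_injective {G : Matrix (Fin n) (Fin n) F} (hG : IsUnit G)
    {G' : (i : Fin n) → Matrix (Fin (K i)) (Fin N) F} (hG' : ∀ i, (G' i).rank = K i)
    (M : (s i : Fin n) → Matrix (Fin (K s)) (Fin N) F) :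
    Function.Injective (igccEncode G G' M) := by
  have : Invertible Gᵀ := (G.isUnit_transpose.mpr hG).invertible
  have hG'_inj (i : Fin n) : Function.Injective fun v => vecMul v (G' i) :=
    vecMul_injective_iff.mpr <| linearIndependent_row_iff_rank_eq_card.mpr <|
      (hG' i).trans (Fintype.card_fin _).symm
  rw [← LinearMap.ker_eq_bot, LinearMap.ker_eq_bot']
  intro u hu
  have hrows : (of fun i => vecMul (u i) (G' i) +
      ∑ s ∈ Finset.univ.filter (· < i), vecMul (u s) (M s i)) = 0 :=
    (Matrix.mul_right_inj_of_invertible Gᵀ).mp (by rw [← igccEncode_apply, hu, Matrix.mul_zero])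
  exact eq_zero_of_triangular_eq_zero (fun i v => vecMul v (G' i))
    (fun i v hv => hG'_inj i (hv.trans (zero_vecMul _).symm))
    (fun s i v => vecMul v (M s i)) (fun s i => zero_vecMul _) u (congrFun hrows)

end Encoder

theorem igcc_injective_and_dim_general {F : Type*} [Field F] {n N : ℕ}
    (G : Matrix (Fin n) (Fin n) F) (hG : IsUnit G)
    (K : Fin n → ℕ)
    (G' : (i : Fin n) → Matrix (Fin (K i)) (Fin N) F)
    (hG' : ∀ i, (G' i).rank = K i)
    (M : (s i : Fin n) → Matrix (Fin (K s)) (Fin N) F) :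
    let f : ((i : Fin n) → (Fin (K i) → F)) → Matrix (Fin n) (Fin N) F :=
      fun u => Gᵀ * Matrix.of fun i =>
        Matrix.vecMul (u i) (G' i) +
          ∑ s ∈ Finset.univ.filter (fun s => s < i), Matrix.vecMul (u s) (M s i);
    Function.Injective f ∧
      ∃ 𝒞 : Submodule F (Matrix (Fin n) (Fin N) F),
        (𝒞 : Set (Matrix (Fin n) (Fin N) F)) = Set.range f ∧
          Module.finrank F 𝒞 = ∑ i, K i := by
  intro f
  have hf : f = igccEncode G G' M := funext fun u => (igccEncode_apply G G' M u).symm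
  have hinj := igccEncode_injective hG hG' M
  rw [hf]
  refine ⟨hinj, LinearMap.range _, LinearMap.coe_range _, ?_⟩
  rw [LinearMap.finrank_range_of_inj hinj, Module.finrank_pi_fintype]
  simp only [Module.finrank_fin_fun]

/-- The interlinked generalized concatenated code construction. `G` is an
invertible `n×n` matrix, each outer generator matrix `G' i` is a `K i × N` matrix of rank
`K i`, and `M s i` are arbitrary interlinking matrices. The map sending
`(u^{(0)}, …, u^{(n−1)})` to `Gᵀ·B`, where the `i`-th row of `B` is
`u^{(i)}·G' i + ∑_{s<i} u^{(s)}·M s i`, is injective; consequently its image is a linear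
code of length `nN` and dimension `∑ K i`. -/
theorem igcc_injective_and_dim {F : Type*} [Field F] [Fintype F] {n N : ℕ}
    (G : Matrix (Fin n) (Fin n) F) (hG : IsUnit G)
    (K : Fin n → ℕ)
    (G' : (i : Fin n) → Matrix (Fin (K i)) (Fin N) F)
    (hG' : ∀ i, (G' i).rank = K i)
    (M : (s i : Fin n) → Matrix (Fin (K s)) (Fin N) F) :
    let f : ((i : Fin n) → (Fin (K i) → F)) → Matrix (Fin n) (Fin N) F :=
      fun u => Gᵀ * Matrix.of fun i =>
        Matrix.vecMul (u i) (G' i) +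
          ∑ s ∈ Finset.univ.filter (fun s => s < i), Matrix.vecMul (u s) (M s i);
    Function.Injective f ∧
      ∃ 𝒞 : Submodule F (Matrix (Fin n) (Fin N) F),
        (𝒞 : Set (Matrix (Fin n) (Fin N) F)) = Set.range f ∧
          Module.finrank F 𝒞 = ∑ i, K i :=
  igcc_injective_and_dim_general G hG K G' hG' M
end
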